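/- The function H_k(q₁,…,q_k) = 2∑_{i≠j} log|q_i−q_j| − (1/r₀²)∑_{j=1}^k (q_j¹)² is a Hamiltonian for the leapfrogging system dq_j/dτ = −4∑_{ℓ≠j}(q_j−q_ℓ)^⊥/|q_j−q_ℓ|² + 2(q_j¹/r₀²)e₂: namely, along any solution with q_i(τ) ≠ q_j(τ) for i ≠ j, the quantity H_k(q₁(τ),…,q_k(τ)) is constant in τ. -/

import Mathlib

/-!
Writing `∇_j H_k` for the gradient of `H_k` in the variable `q_j`, the leapfrogging vector field is
exactly `−(∇_j H_k)^⊥`. By the chain rule the derivative of `H_k` along a solution is therefore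
`−∑_j ⟨∇_j H_k, (∇_j H_k)^⊥⟩ = 0`, and a function with vanishing derivative on `[0,T]` is constant.
-/

/-- `(a,b)^⊥ = (−b,a)`. -/
def perp (p : ℝ × ℝ) : ℝ × ℝ := (-p.2, p.1)

/-- The squared Euclidean norm on `ℝ²`. -/
def enorm2 (p : ℝ × ℝ) : ℝ := p.1 ^ 2 + p.2 ^ 2

/-- The leapfrogging Hamiltonian
`H_k(q₁,…,q_k) = 2∑_{i≠j} log|q_i−q_j| − (1/r₀²)∑_j (q_j¹)²`. -/
noncomputable def Hk (k : ℕ) (r₀ : ℝ) (q : Fin k → ℝ × ℝ) : ℝ :=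
  2 * ∑ i : Fin k, ∑ j ∈ Finset.univ.erase i, Real.log (Real.sqrt (enorm2 (q i - q j)))
    - (1 / r₀ ^ 2) * ∑ j : Fin k, (q j).1 ^ 2

open Finset

def dot (a b : ℝ × ℝ) : ℝ := a.1 * b.1 + a.2 * b.2

lemma dot_perp_self (a : ℝ × ℝ) : dot a (perp a) = 0 := by
  simp only [dot, perp]; ring

lemma dot_neg_right (a b : ℝ × ℝ) : dot a (-b) = -dot a b := by
  simp only [dot, Prod.fst_neg, Prod.snd_neg]; ring

lemma dot_sub_right (a b c : ℝ × ℝ) : dot a (b - c) = dot a b - dot a c := by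
  simp only [dot, Prod.fst_sub, Prod.snd_sub]; ring

lemma dot_sub_left (a b c : ℝ × ℝ) : dot (a - b) c = dot a c - dot b c := by
  simp only [dot, Prod.fst_sub, Prod.snd_sub]; ring

lemma dot_smul_left (r : ℝ) (a b : ℝ × ℝ) : dot (r • a) b = r * dot a b := by
  simp only [dot, Prod.smul_fst, Prod.smul_snd, smul_eq_mul]; ring

lemma dot_sum_left {ι : Type*} (s : Finset ι) (a : ι → ℝ × ℝ) (b : ℝ × ℝ) :
    dot (∑ i ∈ s, a i) b = ∑ i ∈ s, dot (a i) b := by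
  simp only [dot, Prod.fst_sum, Prod.snd_sum, Finset.sum_mul, Finset.sum_add_distrib]

lemma enorm2_nonneg (p : ℝ × ℝ) : 0 ≤ enorm2 p := by
  unfold enorm2; positivity

lemma enorm2_pos {p : ℝ × ℝ} (hp : p ≠ 0) : 0 < enorm2 p := by
  have : p.1 ≠ 0 ∨ p.2 ≠ 0 := by
    by_contra! h
    exact hp (Prod.ext h.1 h.2)
  unfold enorm2
  rcases this with h | h <;> positivity

lemma enorm2_sub_comm (a b : ℝ × ℝ) : enorm2 (a - b) = enorm2 (b - a) := by
  simp only [enorm2, Prod.fst_sub, Prod.snd_sub]; ring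

lemma perp_add (a b : ℝ × ℝ) : perp (a + b) = perp a + perp b := by
  simp only [perp, Prod.fst_add, Prod.snd_add, neg_add, Prod.mk_add_mk]

lemma perp_smul (r : ℝ) (a : ℝ × ℝ) : perp (r • a) = r • perp a := by
  simp only [perp, Prod.smul_fst, Prod.smul_snd, smul_eq_mul, Prod.smul_mk, mul_neg]

lemma perp_sum {ι : Type*} (s : Finset ι) (a : ι → ℝ × ℝ) :
    perp (∑ i ∈ s, a i) = ∑ i ∈ s, perp (a i) := by
  ext <;> simp [perp, Prod.fst_sum, Prod.snd_sum]

lemma HasDerivAt.fst {f : ℝ → ℝ × ℝ} {f' : ℝ × ℝ} {t : ℝ} (hf : HasDerivAt f f' t) :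
    HasDerivAt (fun s => (f s).1) f'.1 t := by
  exact hasFDerivAt_fst.comp_hasDerivAt t hf

lemma HasDerivAt.snd {f : ℝ → ℝ × ℝ} {f' : ℝ × ℝ} {t : ℝ} (hf : HasDerivAt f f' t) :
    HasDerivAt (fun s => (f s).2) f'.2 t := by
  exact hasFDerivAt_snd.comp_hasDerivAt t hf

lemma hasDerivAt_enorm2_comp {f : ℝ → ℝ × ℝ} {f' : ℝ × ℝ} {t : ℝ} (hf : HasDerivAt f f' t) :
    HasDerivAt (fun s => enorm2 (f s)) (2 * dot (f t) f') t := by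
  unfold enorm2
  exact (hf.fst.fun_pow 2).add (hf.snd.fun_pow 2) |>.congr_deriv (by simp only [dot]; push_cast; ring)

lemma hasDerivAt_log_enorm2_comp {f : ℝ → ℝ × ℝ} {f' : ℝ × ℝ} {t : ℝ} (hf : HasDerivAt f f' t)
    (ht : f t ≠ 0) :
    HasDerivAt (fun s => Real.log (enorm2 (f s))) ((enorm2 (f t))⁻¹ * (2 * dot (f t) f')) t := by
  convert (hasDerivAt_enorm2_comp hf).log (enorm2_pos ht).ne' using 1
  rw [div_eq_inv_mul]

section PairSums

variable {ι : Type*} [Fintype ι] [DecidableEq ι]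

lemma sum_sum_erase_comm (f : ι → ι → ℝ) :
    ∑ i, ∑ j ∈ univ.erase i, f i j = ∑ i, ∑ j ∈ univ.erase i, f j i :=
  Finset.sum_comm' fun x y => by simp [ne_comm, and_comm]

/-- Swapping `i` and `j` turns the `v j` half of the sum into minus its `v i` half, by symmetry of
`w` and antisymmetry of `p i - p j`. -/
lemma sum_sum_erase_dot_sub (w : ι → ι → ℝ) (hw : ∀ i j, w i j = w j i) (p v : ι → ℝ × ℝ) :
    ∑ i, ∑ j ∈ univ.erase i, w i j * dot (p i - p j) (v i - v j)
      = 2 * ∑ i, dot (∑ j ∈ univ.erase i, w i j • (p i - p j)) (v i) := by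
  have hswap : ∑ i, ∑ j ∈ univ.erase i, w i j * dot (p i - p j) (v j)
      = -∑ i, ∑ j ∈ univ.erase i, w i j * dot (p i - p j) (v i) := by
    rw [sum_sum_erase_comm]
    simp only [← Finset.sum_neg_distrib]
    refine Finset.sum_congr rfl fun i _ => Finset.sum_congr rfl fun j _ => ?_
    rw [hw j i, ← neg_sub (p i), dot, dot]
    simp only [Prod.fst_neg, Prod.snd_neg]
    ring
  simp only [dot_sub_right, mul_sub, Finset.sum_sub_distrib, hswap, dot_sum_left, dot_smul_left]
  ring

end PairSums

/-- The partial gradient `∇_{q_j} H_k` at the configuration `p`. -/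
noncomputable def gradHk (k : ℕ) (r₀ : ℝ) (p : Fin k → ℝ × ℝ) (j : Fin k) : ℝ × ℝ :=
  (4 : ℝ) • ∑ l ∈ univ.erase j, (enorm2 (p j - p l))⁻¹ • (p j - p l)
    - (2 * (p j).1 / r₀ ^ 2) • ((1 : ℝ), (0 : ℝ))

lemma leapfrog_field_eq_neg_perp_gradHk (k : ℕ) (r₀ : ℝ) (p : Fin k → ℝ × ℝ) (j : Fin k) :
    (-4 : ℝ) • (∑ l ∈ univ.erase j, (enorm2 (p j - p l))⁻¹ • perp (p j - p l))
        + (2 * (p j).1 / r₀ ^ 2) • ((0 : ℝ), (1 : ℝ))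
      = -perp (gradHk k r₀ p j) := by
  simp only [gradHk, sub_eq_add_neg, perp_add, perp_smul, perp_sum, neg_add, neg_smul]
  simp [perp]

lemma Hk_eq_sum_log_enorm2 (k : ℕ) (r₀ : ℝ) (p : Fin k → ℝ × ℝ) :
    Hk k r₀ p = ∑ i, ∑ j ∈ univ.erase i, Real.log (enorm2 (p i - p j))
      - (1 / r₀ ^ 2) * ∑ j, (p j).1 ^ 2 := by
  simp only [Hk, Finset.mul_sum, Real.log_sqrt (enorm2_nonneg _),
    mul_div_cancel₀ _ (two_ne_zero' ℝ)]

lemma sum_dot_gradHk (k : ℕ) (r₀ : ℝ) (p v : Fin k → ℝ × ℝ) :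
    ∑ j, dot (gradHk k r₀ p j) (v j)
      = ∑ i, ∑ j ∈ univ.erase i, (enorm2 (p i - p j))⁻¹ * (2 * dot (p i - p j) (v i - v j))
        - (1 / r₀ ^ 2) * ∑ j, 2 * (p j).1 * (v j).1 := by
  have hpairs := sum_sum_erase_dot_sub (fun i j => (enorm2 (p i - p j))⁻¹)
    (fun i j => by rw [enorm2_sub_comm]) p v
  simp only [mul_left_comm _ (2 : ℝ), ← Finset.mul_sum]
  rw [hpairs]
  simp only [gradHk, dot_sub_left, dot_smul_left, Finset.sum_sub_distrib, ← Finset.mul_sum]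
  congr 1
  · ring
  · rw [Finset.mul_sum]
    exact Finset.sum_congr rfl fun j _ => by simp only [dot]; ring

lemma hasDerivAt_Hk {k : ℕ} (r₀ : ℝ) {q : Fin k → ℝ → ℝ × ℝ} {v : Fin k → ℝ × ℝ} {t : ℝ}
    (hq : ∀ j, HasDerivAt (q j) (v j) t) (hsep : ∀ i j, i ≠ j → q i t ≠ q j t) :
    HasDerivAt (fun s => Hk k r₀ (fun j => q j s))
      (∑ j, dot (gradHk k r₀ (fun i => q i t) j) (v j)) t := by
  have hlog : ∀ i, ∀ j ∈ univ.erase i, HasDerivAt (fun s => Real.log (enorm2 (q i s - q j s)))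
      ((enorm2 (q i t - q j t))⁻¹ * (2 * dot (q i t - q j t) (v i - v j))) t := fun i j hj =>
    hasDerivAt_log_enorm2_comp ((hq i).sub (hq j))
      (sub_ne_zero.mpr (hsep i j (Finset.ne_of_mem_erase hj).symm))
  have hsq : ∀ j, HasDerivAt (fun s => (q j s).1 ^ 2) (2 * (q j t).1 * (v j).1) t := fun j =>
    ((hq j).fst.fun_pow 2).congr_deriv (by push_cast; ring)
  rw [sum_dot_gradHk]
  simp only [Hk_eq_sum_log_enorm2]
  exact (HasDerivAt.fun_sum fun i _ => HasDerivAt.fun_sum (hlog i)).sub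
    ((HasDerivAt.fun_sum fun j _ => hsq j).const_mul (1 / r₀ ^ 2))

theorem leapfrogging_hamiltonian_conserved_general (k : ℕ) (r₀ T : ℝ)
    (q : Fin k → ℝ → ℝ × ℝ)
    (hode : ∀ j : Fin k, ∀ τ ∈ Set.Icc (0 : ℝ) T,
      HasDerivAt (q j)
        ((-4 : ℝ) • (∑ l ∈ Finset.univ.erase j,
            (enorm2 (q j τ - q l τ))⁻¹ • perp (q j τ - q l τ))
          + (2 * (q j τ).1 / r₀ ^ 2) • ((0 : ℝ), (1 : ℝ))) τ)
    (hsep : ∀ τ ∈ Set.Icc (0 : ℝ) T, ∀ i j : Fin k, i ≠ j → q i τ ≠ q j τ) :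
    ∀ τ ∈ Set.Icc (0 : ℝ) T, Hk k r₀ (fun j => q j τ) = Hk k r₀ (fun j => q j 0) := by
  have hderiv : ∀ τ ∈ Set.Icc (0 : ℝ) T, HasDerivAt (fun s => Hk k r₀ (fun j => q j s)) 0 τ := by
    intro τ hτ
    have hq : ∀ j, HasDerivAt (q j) (-perp (gradHk k r₀ (fun i => q i τ) j)) τ := fun j =>
      (hode j τ hτ).congr_deriv (leapfrog_field_eq_neg_perp_gradHk k r₀ (fun i => q i τ) j)
    simpa only [dot_neg_right, dot_perp_self, neg_zero, Finset.sum_const_zero]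
      using hasDerivAt_Hk r₀ hq (hsep τ hτ)
  exact constant_of_has_deriv_right_zero
    (fun t ht => (hderiv t ht).continuousAt.continuousWithinAt)
    (fun t ht => (hderiv t (Set.mem_Icc_of_Ico ht)).hasDerivWithinAt)

/-- `H_k` is conserved along collisionless solutions of the leapfrogging system
`dq_j/dτ = −4∑_{ℓ≠j}(q_j−q_ℓ)^⊥/|q_j−q_ℓ|² + 2(q_j¹/r₀²)e₂` on `[0,T]`. -/
theorem leapfrogging_hamiltonian_conserved (k : ℕ) (hk : 2 ≤ k) (r₀ T : ℝ)
    (hr₀ : 0 < r₀) (hT : 0 < T) (q : Fin k → ℝ → ℝ × ℝ)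
    (hode : ∀ j : Fin k, ∀ τ ∈ Set.Icc (0 : ℝ) T,
      HasDerivAt (q j)
        ((-4 : ℝ) • (∑ l ∈ Finset.univ.erase j,
            (enorm2 (q j τ - q l τ))⁻¹ • perp (q j τ - q l τ))
          + (2 * (q j τ).1 / r₀ ^ 2) • ((0 : ℝ), (1 : ℝ))) τ)
    (hsep : ∀ τ ∈ Set.Icc (0 : ℝ) T, ∀ i j : Fin k, i ≠ j → q i τ ≠ q j τ) :
    ∀ τ ∈ Set.Icc (0 : ℝ) T, Hk k r₀ (fun j => q j τ) = Hk k r₀ (fun j => q j 0) :=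
  leapfrogging_hamiltonian_conserved_general k r₀ T q hode hsep
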